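/- arXiv:0905.0156 — 2 statements merged into one kernel-verified Lean document; each statement's English description precedes it below -/
import Mathlib

section
/- For every real number η with 0 ≤ η < 1/2, the infinite product ∏_{n=1}^{∞} (1 − 2ηⁿ) converges and satisfies ∏_{n=1}^{∞} (1 − 2ηⁿ) ≥ (1 − 2η)^{1/(1−η)}. -/
/-!
By Bernoulli's inequality `1 - 2ηⁿ⁺¹ ≥ (1 - 2η)^(ηⁿ)`, so the product dominates
`∏ (1 - 2η)^(ηⁿ) = (1 - 2η)^(∑ ηⁿ) = (1 - 2η)^(1/(1-η))`. Taking logarithms turns the product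
into a series whose terms lie between `ηⁿ log (1 - 2η)` and `0`, which gives convergence.
-/

open Real

namespace Real

lemma one_sub_rpow_le_one_sub_mul {a t : ℝ} (ha : a ≤ 1) (ht₀ : 0 ≤ t) (ht₁ : t ≤ 1) :
    (1 - a) ^ t ≤ 1 - t * a := by
  simpa [sub_eq_add_neg] using rpow_one_add_le_one_add_mul_self (s := -a) (by linarith) ht₀ ht₁

lemma multipliable_and_rpow_tsum_le_tprod {ι : Type*} {c : ℝ} {f g : ι → ℝ} (hc : 0 < c)
    (hg : Summable g) (hf : ∀ i, f i ≤ 1) (hcf : ∀ i, c ^ g i ≤ f i) :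
    Multipliable f ∧ c ^ (∑' i, g i) ≤ ∏' i, f i := by
  have hf_pos (i : ι) : 0 < f i := (rpow_pos_of_pos hc _).trans_le (hcf i)
  have hlog_ge (i : ι) : g i * log c ≤ log (f i) := by
    simpa [log_rpow hc] using log_le_log (rpow_pos_of_pos hc _) (hcf i)
  have hlog : Summable fun i ↦ log (f i) := by
    refine Summable.of_norm_bounded (hg.mul_right (log c)).neg fun i ↦ ?_
    rw [Real.norm_of_nonpos (log_nonpos (hf_pos i).le (hf i))]
    linarith [hlog_ge i]
  refine ⟨multipliable_of_summable_log hf_pos hlog, ?_⟩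
  rw [← rexp_tsum_eq_tprod hf_pos hlog, rpow_def_of_pos hc, mul_comm, ← tsum_mul_right]
  exact exp_le_exp.mpr ((hg.mul_right _).tsum_le_tsum hlog_ge hlog)

end Real

/-- For `0 ≤ η < 1/2` the infinite product `∏_{n ≥ 1} (1 − 2ηⁿ)`
converges and is at least `(1 − 2η)^{1/(1−η)}`. -/
theorem infinite_product_lower_bound
    (η : ℝ) (h0 : 0 ≤ η) (h1 : η < 1 / 2) :
    Multipliable (fun n : ℕ => 1 - 2 * η ^ (n + 1)) ∧
    (1 - 2 * η) ^ ((1 : ℝ) / (1 - η)) ≤ ∏' n : ℕ, (1 - 2 * η ^ (n + 1)) := by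
  have hη : η < 1 := by linarith
  have hbernoulli (n : ℕ) : (1 - 2 * η) ^ (η ^ n) ≤ 1 - 2 * η ^ (n + 1) := by
    calc (1 - 2 * η) ^ (η ^ n) ≤ 1 - η ^ n * (2 * η) :=
          one_sub_rpow_le_one_sub_mul (by linarith) (by positivity) (pow_le_one₀ h0 hη.le)
      _ = 1 - 2 * η ^ (n + 1) := by ring
  have key := multipliable_and_rpow_tsum_le_tprod (by linarith)
    (summable_geometric_of_lt_one h0 hη) (fun n ↦ by linarith [pow_nonneg h0 (n + 1)]) hbernoulli
  rwa [tsum_geometric_of_lt_one h0 hη, ← one_div] at key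
end

section
/- Let d ≥ 2 and let Aut(T_d) denote the automorphism group of the rooted d-ary tree, i.e. the group of bijections of List (Fin d) that preserve list length and the prefix relation. For each n ≥ 1 let sgn_n(g) ∈ {±1} be the sign of the permutation that g induces on the level set L(n) = (Fin d)^n. Then the group homomorphism g ↦ (sgn_n(g))_{n ≥ 1} from Aut(T_d) to the product ∏_{n ≥ 1} {±1} is surjective: for every sequence ε : {n ≥ 1} → {±1} there exists g ∈ Aut(T_d) with sgn_n(g) = ε(n) for all n ≥ 1. (In particular, Aut(T_d) is not topologically finitely generated.) -/
/-!
An automorphism of the tree is determined by its portrait: the permutation `π v` by which it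
rearranges the children of each vertex `v`. Take the portrait that is trivial off the ray
`a a a …` and equals `σ n` at the ray vertex of level `n`. Splitting a level-`(n+1)` vertex into
its first letter and the rest shows that the level signs satisfy
`sgn_{n+1} = sgn_n ^ d * sgn (σ n)` with `sgn_0 = 1`. Since `Perm (Fin d)` contains odd
permutations for `d ≥ 2`, this recursion can be solved for any prescribed sequence of signs.
-/

instance instFintypeLevel (d n : ℕ) : Fintype {l : List (Fin d) // l.length = n} := by
  apply Fintype.ofSurjective
    (fun f : Fin n → Fin d =>
      (⟨List.ofFn f, List.length_ofFn (f := f)⟩ : {l : List (Fin d) // l.length = n}))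
  rintro ⟨l, rfl⟩
  exact ⟨l.get, Subtype.ext (List.ofFn_get l)⟩

/-- The permutation induced on the level-`n` vertex set by a length-preserving bijection of
the rooted `d`-ary tree. -/
def levelPermOf {d : ℕ} (g : Equiv.Perm (List (Fin d)))
    (hg : ∀ l, (g l).length = l.length) (n : ℕ) :
    Equiv.Perm {l : List (Fin d) // l.length = n} :=
  g.subtypePerm (fun l => by rw [hg l])

open Equiv Equiv.Perm

lemma card_level (d m : ℕ) : Fintype.card {l : List (Fin d) // l.length = m} = d ^ m := by
  convert card_vector (α := Fin d) m using 1
  · exact Fintype.card_congr (Equiv.refl _)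
  · simp

def levelSuccEquiv (d m : ℕ) :
    {l : List (Fin d) // l.length = m + 1} ≃ Fin d × {l : List (Fin d) // l.length = m} where
  toFun
    | ⟨a :: t, h⟩ => (a, ⟨t, Nat.succ_injective h⟩)
  invFun p := ⟨p.1 :: p.2.1, congrArg Nat.succ p.2.2⟩
  left_inv := by rintro ⟨_ | ⟨a, t⟩, h⟩ <;> simp at h ⊢
  right_inv _ := rfl

lemma sign_levelPermOf_zero {d : ℕ} (g : Perm (List (Fin d)))
    (hg : ∀ l, (g l).length = l.length) :
    sign (levelPermOf g hg 0) = 1 := by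
  have : Subsingleton {l : List (Fin d) // l.length = 0} :=
    ⟨fun ⟨l, hl⟩ ⟨l', hl'⟩ => by
      rw [List.length_eq_zero_iff] at hl hl'
      subst hl hl'
      rfl⟩
  rw [Subsingleton.elim (levelPermOf g hg 0) 1, Perm.sign_one]

abbrev Portrait (d : ℕ) := List (Fin d) → Perm (Fin d)

namespace Portrait

variable {d : ℕ}

def child (π : Portrait d) (a : Fin d) : Portrait d := fun v => π (a :: v)

def act : Portrait d → List (Fin d) → List (Fin d)
  | _, [] => []
  | π, a :: t => π [] a :: act (π.child a) t

@[simp] lemma act_nil (π : Portrait d) : act π [] = [] := rfl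

@[simp] lemma act_cons (π : Portrait d) (a : Fin d) (t : List (Fin d)) :
    act π (a :: t) = π [] a :: act (π.child a) t := rfl

lemma length_act (π : Portrait d) (l : List (Fin d)) : (act π l).length = l.length := by
  induction l generalizing π with
  | nil => rfl
  | cons a t ih => simp [ih]

lemma act_injective (π : Portrait d) : Function.Injective (act π) := by
  intro l₁ l₂ h
  induction l₁ generalizing l₂ π with
  | nil => cases l₂ <;> simp_all
  | cons a t ih =>
    cases l₂ with
    | nil => simp at h
    | cons b t' =>
      obtain ⟨hab, ht⟩ := List.cons.inj h
      obtain rfl := (π []).injective hab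
      rw [ih _ ht]

lemma act_surjective (π : Portrait d) : Function.Surjective (act π) := by
  intro l
  induction l generalizing π with
  | nil => exact ⟨[], rfl⟩
  | cons b t ih =>
    obtain ⟨m, hm⟩ := ih (π.child ((π []).symm b))
    exact ⟨(π []).symm b :: m, by simp [hm]⟩

lemma act_append (π : Portrait d) (u w : List (Fin d)) :
    act π (u ++ w) = act π u ++ act (fun v => π (u ++ v)) w := by
  induction u generalizing π with
  | nil => rfl
  | cons a t ih => simp [ih, child]

lemma act_isPrefix (π : Portrait d) {u v : List (Fin d)} (h : u <+: v) :
    act π u <+: act π v := by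
  obtain ⟨w, rfl⟩ := h
  exact ⟨_, (act_append π u w).symm⟩

@[simp] lemma child_one (a : Fin d) : child (1 : Portrait d) a = 1 := rfl

@[simp] lemma act_one (l : List (Fin d)) : act 1 l = l := by
  induction l with
  | nil => rfl
  | cons a t ih => simpa using ih

noncomputable def toPerm (π : Portrait d) : Perm (List (Fin d)) :=
  Equiv.ofBijective (act π) ⟨act_injective π, act_surjective π⟩

lemma length_toPerm (π : Portrait d) (l : List (Fin d)) : (π.toPerm l).length = l.length :=
  length_act π l

noncomputable def levelSign (π : Portrait d) (n : ℕ) : ℤˣ :=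
  sign (levelPermOf π.toPerm π.length_toPerm n)

lemma levelSign_zero (π : Portrait d) : π.levelSign 0 = 1 :=
  sign_levelPermOf_zero _ _

lemma levelSign_one (n : ℕ) : levelSign (1 : Portrait d) n = 1 := by
  have : levelPermOf (toPerm (1 : Portrait d)) (length_toPerm 1) n = 1 := by
    ext ⟨l, hl⟩ : 2
    exact act_one l
  rw [levelSign, this, Perm.sign_one]

lemma levelSign_succ (π : Portrait d) (m : ℕ) :
    π.levelSign (m + 1) = sign (π []) ^ d ^ m * ∏ a, (π.child a).levelSign m := by
  have hconj : (levelSuccEquiv d m).permCongr (levelPermOf π.toPerm π.length_toPerm (m + 1)) =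
      prodCongrLeft (fun _ => π []) *
        prodCongrRight (fun a => levelPermOf (π.child a).toPerm (π.child a).length_toPerm m) := by
    ext ⟨a, t, ht⟩ <;> rfl
  rw [levelSign, ← sign_permCongr (levelSuccEquiv d m), hconj, map_mul, sign_prodCongrLeft,
    sign_prodCongrRight, Finset.prod_const, Finset.card_univ, card_level]
  rfl

def spine (a : Fin d) (σ : ℕ → Perm (Fin d)) : Portrait d := fun v =>
  if v = List.replicate v.length a then σ v.length else 1

@[simp] lemma spine_nil (a : Fin d) (σ : ℕ → Perm (Fin d)) : spine a σ [] = σ 0 := rfl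

lemma child_spine_self (a : Fin d) (σ : ℕ → Perm (Fin d)) :
    (spine a σ).child a = spine a (fun n => σ (n + 1)) := by
  ext1 v
  simp only [child, spine, List.length_cons, List.replicate_succ, List.cons.injEq, true_and]

lemma child_spine_of_ne {a b : Fin d} (σ : ℕ → Perm (Fin d)) (hb : b ≠ a) :
    (spine a σ).child b = 1 := by
  ext1 v
  simp [child, spine, List.replicate_succ, hb]

lemma levelSign_spine_succ_eq_mul_shift (a : Fin d) (σ : ℕ → Perm (Fin d)) (m : ℕ) :
    (spine a σ).levelSign (m + 1) =
      sign (σ 0) ^ d ^ m * (spine a (fun n => σ (n + 1))).levelSign m := by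
  rw [levelSign_succ, Finset.prod_eq_single a, child_spine_self, spine_nil]
  · intro b _ hb
    rw [child_spine_of_ne σ hb, levelSign_one]
  · simp

lemma levelSign_spine_succ (a : Fin d) (σ : ℕ → Perm (Fin d)) (n : ℕ) :
    (spine a σ).levelSign (n + 1) = (spine a σ).levelSign n ^ d * sign (σ n) := by
  induction n generalizing σ with
  | zero => simp [levelSign_spine_succ_eq_mul_shift, levelSign_zero]
  | succ n ih =>
    rw [levelSign_spine_succ_eq_mul_shift a σ (n + 1), ih,
      levelSign_spine_succ_eq_mul_shift a σ n, mul_pow, ← pow_mul, ← pow_succ, mul_assoc]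

end Portrait

-- Units of `ℤ` are their own inverses, so this solves `levelSign_spine_succ` for `sign (σ n)`.
def spineSigns (d : ℕ) (ε : ℕ → ℤˣ) : ℕ → ℤˣ
  | 0 => ε 0
  | n + 1 => ε (n + 1) * ε n ^ d

lemma Portrait.levelSign_spine_of_sign_eq_spineSigns {d : ℕ} (a : Fin d)
    {σ : ℕ → Perm (Fin d)} {ε : ℕ → ℤˣ} (hσ : ∀ n, sign (σ n) = spineSigns d ε n)
    (n : ℕ) :
    (spine a σ).levelSign (n + 1) = ε n := by
  induction n with
  | zero => simp [levelSign_spine_succ, levelSign_zero, hσ, spineSigns]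
  | succ n ih =>
    rw [levelSign_spine_succ, ih, hσ, spineSigns, mul_left_comm, ← sq, Int.units_sq, mul_one]

/-- The homomorphism `Aut(T_d) → ∏_{n ≥ 1} {±1}` recording the signs of
the permutations induced on the levels is surjective (hence `Aut(T_d)` is not topologically
finitely generated): automorphisms are bijections of `List (Fin d)` preserving length and
the prefix relation. -/
theorem signs_surjective {d : ℕ} (hd : 2 ≤ d) :
    ∀ ε : ℕ → ℤˣ,
      ∃ (g : Equiv.Perm (List (Fin d))) (hg : ∀ l, (g l).length = l.length),
        (∀ u v : List (Fin d), u <+: v → g u <+: g v) ∧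
        ∀ n : ℕ, Equiv.Perm.sign (levelPermOf g hg (n + 1)) = ε n := by
  intro ε
  have : Nontrivial (Fin d) := Fin.nontrivial_iff_two_le.mpr hd
  choose τ hτ using sign_surjective (α := Fin d)
  let π := Portrait.spine ⟨0, by omega⟩ (fun n => τ (spineSigns d ε n))
  exact ⟨π.toPerm, π.length_toPerm, fun _ _ => π.act_isPrefix,
    Portrait.levelSign_spine_of_sign_eq_spineSigns _ (fun n => hτ _)⟩
end
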